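/- For all x, y ∈ ℝⁿ = (Fin n → ℝ), the minimum over all permutations σ ∈ Equiv.Perm (Fin n) of the Euclidean distance ‖x − σ • y‖ (where (σ • y) i = y(σ⁻¹ i)) equals the Euclidean distance ‖s(x) − s(y)‖ between the sorted versions of x and y. In particular, the quotient metric on the orbit space ℝⁿ/S_n, defined by d([x],[y]) = min_{σ ∈ S_n} ‖x − σ • y‖, is realized by sorting, so the induced bijection s' : ℝⁿ/S_n → Z_s onto the set of monotone vectors (with the Euclidean metric) is an isometry. -/

import Mathlib

/-!
Expanding the square, `∑ (x i - (σ • y) i)² = ∑ x i² + ∑ y i² - 2 ∑ x i (σ • y) i`, and only the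
cross term depends on `σ`. By the rearrangement inequality the cross term is largest when the
two vectors are similarly ordered, which is the case for the pairing of `sortVec x` with
`sortVec y`; the permutation `Tuple.sort x * (Tuple.sort y)⁻¹` realises this pairing.
-/

/-- The action of `Equiv.Perm (Fin n)` on `Fin n → ℝ` by permuting coordinates:
`(σ • z) i = z (σ⁻¹ i)`. -/
instance permSMul (n : ℕ) : MulAction (Equiv.Perm (Fin n)) (Fin n → ℝ) where
  smul σ z := fun i => z (σ⁻¹ i)
  one_smul _ := rfl
  mul_smul _ _ _ := rfl

/-- The sorting map: `sortVec z` has the same multiset of coordinates as `z`,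
arranged in ascending (monotone) order. -/
noncomputable def sortVec {n : ℕ} (z : Fin n → ℝ) : Fin n → ℝ := z ∘ Tuple.sort z

lemma Finset.sum_sq_sub_eq {ι : Type*} [Fintype ι] (a b : ι → ℝ) :
    ∑ i, (a i - b i) ^ 2 = ∑ i, a i ^ 2 + ∑ i, b i ^ 2 - 2 * ∑ i, a i * b i := by
  rw [← Finset.sum_add_distrib, Finset.mul_sum, ← Finset.sum_sub_distrib]
  exact Finset.sum_congr rfl fun i _ => by ring

section SortVec

variable {n : ℕ}

@[simp]
lemma perm_smul_apply (σ : Equiv.Perm (Fin n)) (z : Fin n → ℝ) (i : Fin n) :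
    (σ • z) i = z (σ⁻¹ i) :=
  rfl

lemma sum_comp_sortVec {M : Type*} [AddCommMonoid M] (f : ℝ → M) (z : Fin n → ℝ) :
    ∑ i, f (sortVec z i) = ∑ i, f (z i) :=
  Equiv.sum_comp (Tuple.sort z) (f ∘ z)

lemma sum_sq_smul (σ : Equiv.Perm (Fin n)) (z : Fin n → ℝ) :
    ∑ i, (σ • z) i ^ 2 = ∑ i, z i ^ 2 :=
  Equiv.sum_comp σ⁻¹ (fun i => z i ^ 2)

lemma sum_mul_comp_perm_le_sum_sortVec_mul (x y : Fin n → ℝ) (π : Equiv.Perm (Fin n)) :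
    ∑ i, x i * y (π i) ≤ ∑ i, sortVec x i * sortVec y i := by
  have hmonovary : Monovary (sortVec x) (sortVec y) :=
    (Tuple.monotone_sort x).monovary (Tuple.monotone_sort y)
  calc ∑ i, x i * y (π i)
      = ∑ j, x (Tuple.sort x j) * y (π (Tuple.sort x j)) :=
        (Equiv.sum_comp (Tuple.sort x) fun i => x i * y (π i)).symm
    _ = ∑ j, sortVec x j * sortVec y (((Tuple.sort y)⁻¹ * π * Tuple.sort x) j) := by
        simp [sortVec]
    _ ≤ ∑ i, sortVec x i * sortVec y i := hmonovary.sum_mul_comp_perm_le_sum_mul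

lemma sum_sq_sub_sortVec_le (x y : Fin n → ℝ) (σ : Equiv.Perm (Fin n)) :
    ∑ i, (sortVec x i - sortVec y i) ^ 2 ≤ ∑ i, (x i - (σ • y) i) ^ 2 := by
  have hcross : ∑ i, x i * (σ • y) i ≤ ∑ i, sortVec x i * sortVec y i :=
    sum_mul_comp_perm_le_sum_sortVec_mul x y σ⁻¹
  rw [Finset.sum_sq_sub_eq, Finset.sum_sq_sub_eq, sum_sq_smul,
    sum_comp_sortVec (· ^ 2), sum_comp_sortVec (· ^ 2)]
  linarith

lemma sum_sq_sub_sort_mul_inv_smul (x y : Fin n → ℝ) :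
    ∑ i, (x i - ((Tuple.sort x * (Tuple.sort y)⁻¹) • y) i) ^ 2 =
      ∑ i, (sortVec x i - sortVec y i) ^ 2 := by
  rw [← Equiv.sum_comp (Tuple.sort x)]
  simp [sortVec]

end SortVec

/-- The quotient metric
`d([x],[y]) = min_{σ ∈ S_n} ‖x − σ • y‖` (Euclidean norm) is realized by sorting: the
minimum over all permutations equals the Euclidean distance between the sorted versions,
and it is attained.  Hence the induced bijection onto the set of monotone vectors is an
isometry. -/
theorem stmt_10 (n : ℕ) (x y : Fin n → ℝ) :
    (⨅ σ : Equiv.Perm (Fin n), Real.sqrt (∑ i, (x i - (σ • y) i) ^ 2)) =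
      Real.sqrt (∑ i, (sortVec x i - sortVec y i) ^ 2) ∧
    ∃ σ : Equiv.Perm (Fin n),
      Real.sqrt (∑ i, (x i - (σ • y) i) ^ 2) =
        Real.sqrt (∑ i, (sortVec x i - sortVec y i) ^ 2) := by
  have hσ₀ := congrArg Real.sqrt (sum_sq_sub_sort_mul_inv_smul x y)
  refine ⟨le_antisymm ?_ ?_, _, hσ₀⟩
  · exact ciInf_le_of_le (Finite.bddBelow_range _) _ hσ₀.le
  · exact le_ciInf fun σ => Real.sqrt_le_sqrt (sum_sq_sub_sortVec_le x y σ)
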